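/- arXiv:1608.06016 — 2 statements merged into one kernel-verified Lean document; each statement's English description precedes it below -/
import Mathlib

section
/- Let u⁺, u⁻, û > 0 with û = min(u⁺, u⁻), and let f', Δ, Φ, γ be reals with Φ = 1/u⁺ − 1/u⁻, |Δ − Φ| ≤ γ/û, 0 ≤ γ ≤ 1/2, and 0 ≤ f' ≤ u⁺. Then f'·Δ ≤ 1 + γ. -/
theorem per_arc_duality_bound (uplus uminus uhat f' Δ Φ γ : ℝ)
    (huplus : 0 < uplus) (huminus : 0 < uminus)
    (huhat : uhat = min uplus uminus)
    (hΦ : Φ = 1 / uplus - 1 / uminus)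
    (hcoupling : |Δ - Φ| ≤ γ / uhat)
    (hγ0 : 0 ≤ γ) (hγ : γ ≤ 1 / 2)
    (hf0 : 0 ≤ f') (hf : f' ≤ uplus) :
    f' * Δ ≤ 1 + γ := by
  have hub := (abs_le.mp hcoupling).2
  rcases le_total uplus uminus with h | h
  · have hm : uhat = uplus := by rw [huhat, min_eq_left h]
    subst hm hΦ
    have hΔ : Δ ≤ (1 + γ) / uhat := by
      have h1 : 1 / uminus ≥ 0 := by positivity
      have : Δ ≤ 1 / uhat - 1 / uminus + γ / uhat := by linarith
      have := this.trans (by linarith : 1 / uhat - 1 / uminus + γ / uhat ≤ 1 / uhat + γ / uhat)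
      calc Δ ≤ 1 / uhat + γ / uhat := this
        _ = (1 + γ) / uhat := by ring
    calc f' * Δ ≤ f' * ((1 + γ) / uhat) :=
          mul_le_mul_of_nonneg_left hΔ hf0
      _ ≤ uhat * ((1 + γ) / uhat) := by
          apply mul_le_mul_of_nonneg_right hf
          positivity
      _ = 1 + γ := by field_simp
  · have hm : uhat = uminus := by rw [huhat, min_eq_right h]
    subst hm hΦ
    have hΔ : Δ ≤ 1 / uplus - (1 - γ) / uhat := by
      have : Δ ≤ 1 / uplus - 1 / uhat + γ / uhat := by linarith
      linarith [this, (by ring : 1 / uplus - 1 / uhat + γ / uhat = 1 / uplus - (1 - γ) / uhat)]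
    have h1 : (1 - γ) / uhat ≥ 0 := by
      apply div_nonneg (by linarith) huminus.le
    have : f' * Δ ≤ f' * (1 / uplus) := by
      have := mul_le_mul_of_nonneg_left hΔ hf0
      nlinarith
    have h2 : f' * (1 / uplus) ≤ 1 := by
      rw [mul_one_div, div_le_one huplus]; exact hf
    linarith
end

section
/- Let u⁺, u⁻ > 0, û = min(u⁺,u⁻), Φ = 1/u⁺ − 1/u⁻, and θ a real with |θ| ≤ û/4. Define Δ = Φ + (1/(u⁺)² + 1/(u⁻)²)·θ. Then |Δ − (1/(u⁺ − θ) − 1/(u⁻ + θ))| ≤ 5·θ²/û³. -/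
theorem fixing_step_residual_coupling (uplus uminus uhat θ : ℝ)
    (huplus : 0 < uplus) (huminus : 0 < uminus)
    (huhat : uhat = min uplus uminus)
    (hθ : |θ| ≤ uhat / 4) :
    |(1 / uplus - 1 / uminus + (1 / uplus ^ 2 + 1 / uminus ^ 2) * θ) -
        (1 / (uplus - θ) - 1 / (uminus + θ))| ≤ 5 * θ ^ 2 / uhat ^ 3 := by
  have hu : 0 < uhat := by rw [huhat]; exact lt_min huplus huminus
  have hua : uhat ≤ uplus := huhat ▸ min_le_left _ _
  have hub : uhat ≤ uminus := huhat ▸ min_le_right _ _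
  have habs := abs_le.mp hθ
  have ha' : 3 / 4 * uplus ≤ uplus - θ := by nlinarith [habs.1, habs.2]
  have hb' : 3 / 4 * uminus ≤ uminus + θ := by nlinarith [habs.1, habs.2]
  have ha'0 : 0 < uplus - θ := by nlinarith
  have hb'0 : 0 < uminus + θ := by nlinarith
  have heq : (1 / uplus - 1 / uminus + (1 / uplus ^ 2 + 1 / uminus ^ 2) * θ) -
        (1 / (uplus - θ) - 1 / (uminus + θ)) =
      θ ^ 2 * (1 / (uminus ^ 2 * (uminus + θ)) - 1 / (uplus ^ 2 * (uplus - θ))) := by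
    field_simp
    ring
  rw [heq, abs_mul, abs_of_nonneg (sq_nonneg θ)]
  have hA : 1 / (uplus ^ 2 * (uplus - θ)) ≤ 4 / (3 * uhat ^ 3) := by
    rw [div_le_div_iff₀ (by positivity) (by positivity)]
    nlinarith [pow_le_pow_left₀ hu.le hua 3,
      mul_le_mul_of_nonneg_left ha' (by positivity : (0:ℝ) ≤ uplus ^ 2)]
  have hB : 1 / (uminus ^ 2 * (uminus + θ)) ≤ 4 / (3 * uhat ^ 3) := by
    rw [div_le_div_iff₀ (by positivity) (by positivity)]
    nlinarith [pow_le_pow_left₀ hu.le hub 3,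
      mul_le_mul_of_nonneg_left hb' (by positivity : (0:ℝ) ≤ uminus ^ 2)]
  have habsd : |1 / (uminus ^ 2 * (uminus + θ)) - 1 / (uplus ^ 2 * (uplus - θ))| ≤
      8 / (3 * uhat ^ 3) := by
    have h48 : (4:ℝ) / (3 * uhat ^ 3) + 4 / (3 * uhat ^ 3) = 8 / (3 * uhat ^ 3) := by ring
    rw [abs_sub_le_iff]
    constructor
    · have : (0:ℝ) ≤ 1 / (uplus ^ 2 * (uplus - θ)) := by positivity
      linarith
    · have : (0:ℝ) ≤ 1 / (uminus ^ 2 * (uminus + θ)) := by positivity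
      linarith
  calc θ ^ 2 * |1 / (uminus ^ 2 * (uminus + θ)) - 1 / (uplus ^ 2 * (uplus - θ))|
      ≤ θ ^ 2 * (8 / (3 * uhat ^ 3)) := by
        exact mul_le_mul_of_nonneg_left habsd (sq_nonneg θ)
    _ ≤ 5 * θ ^ 2 / uhat ^ 3 := by
        have hid : 5 * θ ^ 2 / uhat ^ 3 =
            θ ^ 2 * (8 / (3 * uhat ^ 3)) + 7 * θ ^ 2 / (3 * uhat ^ 3) := by
          field_simp
          ring
        have h7 : 0 ≤ 7 * θ ^ 2 / (3 * uhat ^ 3) := by positivity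
        linarith
end
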